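/- arXiv:1604.01433 — 3 statements merged into one kernel-verified Lean document; each statement's English description precedes it below -/
import Mathlib

section
/- For q ∈ (0, 1/2), the function g(r) = h₂(r ∗ q) − h₂(r) is strictly convex on [0, 1/2]. -/
/-- Binary convolution `a ∗ b = a(1-b) + b(1-a)`. -/
noncomputable def bconv (a b : ℝ) : ℝ := a * (1 - b) + b * (1 - a)

/-- Binary entropy (base 2), with the convention `0 · log 0 = 0`. -/
noncomputable def h2 (x : ℝ) : ℝ := -x * Real.logb 2 x - (1 - x) * Real.logb 2 (1 - x)

/-!
Since `r ∗ q = q + (1 - 2q) r` is affine in `r` and the natural-log binary entropy has second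
derivative `-1 / (p (1 - p))`, we get `log 2 · g''(r) = 1 / (r (1 - r)) - (1 - 2q)² / (s (1 - s))`
with `s = r ∗ q`. The identity `s (1 - s) = q (1 - q) + (1 - 2q)² r (1 - r)` makes this positive
for every `r ∈ (0, 1)`, so `g` is even strictly convex on `[0, 1]` for all `q ∈ (0, 1)`.
-/

open Real Set Filter Topology

lemma StrictConvexOn.div_const {E : Type*} [AddCommMonoid E] [Module ℝ E] {s : Set E} {f : E → ℝ}
    (hf : StrictConvexOn ℝ s f) {c : ℝ} (hc : 0 < c) : StrictConvexOn ℝ s (fun x => f x / c) := by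
  refine ⟨hf.1, fun x hx y hy hxy a b ha hb hab => ?_⟩
  have := hf.2 hx hy hxy ha hb hab
  simp only [smul_eq_mul] at this ⊢
  rw [mul_div_assoc', mul_div_assoc', ← add_div]
  exact div_lt_div_of_pos_right this hc

lemma h2_eq_binEntropy_div (x : ℝ) : h2 x = binEntropy x / log 2 := by
  simp only [h2, binEntropy, logb, log_inv]
  ring

lemma bconv_eq_add_mul (r q : ℝ) : bconv r q = q + (1 - 2 * q) * r := by
  unfold bconv; ring

lemma bconv_mul_one_sub_bconv (r q : ℝ) :
    bconv r q * (1 - bconv r q) = q * (1 - q) + (1 - 2 * q) ^ 2 * (r * (1 - r)) := by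
  unfold bconv; ring

lemma bconv_mem_Ioo {r q : ℝ} (hr : r ∈ Ioo (0 : ℝ) 1) (hq : q ∈ Ioo (0 : ℝ) 1) :
    bconv r q ∈ Ioo (0 : ℝ) 1 := by
  obtain ⟨hr0, hr1⟩ := hr
  obtain ⟨hq0, hq1⟩ := hq
  constructor
  · unfold bconv; nlinarith
  · have : 1 - bconv r q = r * q + (1 - r) * (1 - q) := by unfold bconv; ring
    nlinarith

lemma hasDerivAt_deriv_binEntropy {p : ℝ} (hp₀ : p ≠ 0) (hp₁ : p ≠ 1) :
    HasDerivAt (deriv binEntropy) (-1 / (p * (1 - p))) p := by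
  have hdiff : DifferentiableAt ℝ (deriv binEntropy) p := by
    rw [funext deriv_binEntropy]
    have : 1 - p ≠ 0 := sub_ne_zero.2 hp₁.symm
    fun_prop (disch := assumption)
  rw [← deriv2_binEntropy]
  exact hdiff.hasDerivAt

section AffineDifference

variable {a b x : ℝ}

lemma hasDerivAt_binEntropy_affine_sub (hx : x ∈ Ioo (0 : ℝ) 1) (hs : a + b * x ∈ Ioo (0 : ℝ) 1) :
    HasDerivAt (fun r => binEntropy (a + b * r) - binEntropy r)
      (deriv binEntropy (a + b * x) * b - deriv binEntropy x) x := by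
  have hinner : HasDerivAt (fun r => a + b * r) b x := by
    simpa using ((hasDerivAt_id x).const_mul b).const_add a
  have houter := (differentiableAt_binEntropy hs.1.ne' hs.2.ne).hasDerivAt
  have hself := (differentiableAt_binEntropy hx.1.ne' hx.2.ne).hasDerivAt
  exact (houter.comp x hinner).fun_sub hself

lemma deriv2_binEntropy_affine_sub (hx : x ∈ Ioo (0 : ℝ) 1) (hs : a + b * x ∈ Ioo (0 : ℝ) 1) :
    deriv^[2] (fun r => binEntropy (a + b * r) - binEntropy r) x =
      1 / (x * (1 - x)) - b ^ 2 / ((a + b * x) * (1 - (a + b * x))) := by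
  have hnhds : {r | r ∈ Ioo (0 : ℝ) 1 ∧ a + b * r ∈ Ioo (0 : ℝ) 1} ∈ 𝓝 x :=
    ((isOpen_Ioo.inter (isOpen_Ioo.preimage (by fun_prop))).mem_nhds ⟨hx, hs⟩)
  have hD : deriv (fun r => binEntropy (a + b * r) - binEntropy r) =ᶠ[𝓝 x]
      fun r => deriv binEntropy (a + b * r) * b - deriv binEntropy r :=
    eventually_of_mem hnhds fun r hr => (hasDerivAt_binEntropy_affine_sub hr.1 hr.2).deriv
  have hinner : HasDerivAt (fun r => a + b * r) b x := by
    simpa using ((hasDerivAt_id x).const_mul b).const_add a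
  have hD' : HasDerivAt (fun r => deriv binEntropy (a + b * r) * b - deriv binEntropy r)
      (-1 / ((a + b * x) * (1 - (a + b * x))) * b * b - -1 / (x * (1 - x))) x := by
    have houter := hasDerivAt_deriv_binEntropy hs.1.ne' hs.2.ne
    exact ((houter.comp x hinner).mul_const b).fun_sub
      (hasDerivAt_deriv_binEntropy hx.1.ne' hx.2.ne)
  rw [Function.iterate_succ_apply', Function.iterate_one, hD.deriv_eq, hD'.deriv]
  ring

end AffineDifference

lemma strictConvexOn_binEntropy_bconv_sub {q : ℝ} (hq : q ∈ Ioo (0 : ℝ) 1) :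
    StrictConvexOn ℝ (Icc 0 1) (fun r => binEntropy (bconv r q) - binEntropy r) := by
  simp only [bconv_eq_add_mul]
  refine strictConvexOn_of_deriv2_pos (convex_Icc 0 1) (by fun_prop) fun x hx => ?_
  rw [interior_Icc] at hx
  have hs := bconv_mem_Ioo hx hq
  rw [bconv_eq_add_mul] at hs
  rw [deriv2_binEntropy_affine_sub hx hs, ← bconv_eq_add_mul, bconv_mul_one_sub_bconv, sub_pos]
  have hx' : 0 < x * (1 - x) := mul_pos hx.1 (sub_pos.2 hx.2)
  have hq' : 0 < q * (1 - q) := mul_pos hq.1 (sub_pos.2 hq.2)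
  rw [div_lt_div_iff₀ (by positivity) hx']
  nlinarith

theorem stmt2 (q : ℝ) (hq : q ∈ Set.Ioo (0:ℝ) (1/2)) :
    StrictConvexOn ℝ (Set.Icc (0:ℝ) (1/2)) (fun r => h2 (bconv r q) - h2 r) := by
  have hq' : q ∈ Ioo (0 : ℝ) 1 := ⟨hq.1, by linarith [hq.2]⟩
  have h := ((strictConvexOn_binEntropy_bconv_sub hq').div_const (log_pos one_lt_two)).subset
    (Icc_subset_Icc_right (by norm_num : (1 / 2 : ℝ) ≤ 1)) (convex_Icc _ _)
  simpa only [h2_eq_binEntropy_div, sub_div] using h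
end

section
/- Let X₁, X₂, Y, V₁, V₂ be discrete random variables with joint pmf p(x₁,x₂,y)p(v₁|x₁)p(v₂|x₁,x₂,v₁), and suppose X₁ − X₂ − Y form a Markov chain. Define the modified pmf p̃(x₁,x₂,y,v₁,v₂) = p(x₁,x₂,y) p(v₁|x₁) p̃(v₂|x₂,v₁) where p̃(v₂|x₂,v₁) := p(x₂,v₁,v₂)/p(x₂,v₁). Then under p̃ the marginal of (Y, V₁, V₂) equals the marginal of (Y, V₁, V₂) under p. -/
open Finset

/-- under a joint pmf `p(x₁,x₂,y) p(v₁|x₁) p(v₂|x₁,x₂,v₁)` with the Markov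
chain `X₁ − X₂ − Y`, replacing `p(v₂|x₁,x₂,v₁)` by the marginalized conditional
`p̃(v₂|x₂,v₁) = p(x₂,v₁,v₂)/p(x₂,v₁)` preserves the marginal of `(Y,V₁,V₂)`. -/
theorem stmt7 {A1 A2 AY V1 V2 : Type*} [Fintype A1] [Fintype A2] [Fintype AY]
    [Fintype V1] [Fintype V2]
    (p : A1 → A2 → AY → ℝ) (pV1 : A1 → V1 → ℝ) (pV2 : A1 → A2 → V1 → V2 → ℝ)
    (hp0 : ∀ x1 x2 y, 0 ≤ p x1 x2 y)
    (hp1 : ∑ x1, ∑ x2, ∑ y, p x1 x2 y = 1)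
    (hV10 : ∀ x1 v1, 0 ≤ pV1 x1 v1) (hV11 : ∀ x1, ∑ v1, pV1 x1 v1 = 1)
    (hV20 : ∀ x1 x2 v1 v2, 0 ≤ pV2 x1 x2 v1 v2)
    (hV21 : ∀ x1 x2 v1, ∑ v2, pV2 x1 x2 v1 v2 = 1)
    -- Markov chain X₁ − X₂ − Y (i.e. p(y|x₁,x₂) = p(y|x₂)):
    (hMarkov : ∀ x1 x2 y,
      p x1 x2 y * (∑ x1', ∑ y', p x1' x2 y') =
        (∑ y', p x1 x2 y') * (∑ x1', p x1' x2 y))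
    -- positivity of the conditioning events: P(x₂,v₁) > 0
    (hpos : ∀ x2 v1, 0 < ∑ x1, (∑ y, p x1 x2 y) * pV1 x1 v1) :
    ∀ y v1 v2,
      (∑ x1, ∑ x2, p x1 x2 y * pV1 x1 v1 *
          ((∑ x1', (∑ y', p x1' x2 y') * pV1 x1' v1 * pV2 x1' x2 v1 v2) /
            (∑ x1', (∑ y', p x1' x2 y') * pV1 x1' v1))) =
        ∑ x1, ∑ x2, p x1 x2 y * pV1 x1 v1 * pV2 x1 x2 v1 v2 := by
  intro y v1 v2
  rw [Finset.sum_comm]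
  conv_rhs => rw [Finset.sum_comm]
  refine Finset.sum_congr rfl fun x2 _ => ?_
  set S := ∑ x1', ∑ y', p x1' x2 y' with hSdef
  set D := ∑ x1', (∑ y', p x1' x2 y') * pV1 x1' v1 with hDdef
  set N := ∑ x1', (∑ y', p x1' x2 y') * pV1 x1' v1 * pV2 x1' x2 v1 v2 with hNdef
  set r := ∑ x1', p x1' x2 y with hrdef
  have hD : 0 < D := hpos x2 v1
  have hS : 0 < S := by
    refine lt_of_lt_of_le hD ?_
    refine Finset.sum_le_sum fun x1 _ => ?_
    have h1 : pV1 x1 v1 ≤ 1 := by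
      rw [← hV11 x1]
      exact Finset.single_le_sum (fun v _ => hV10 x1 v) (Finset.mem_univ v1)
    have h2 : 0 ≤ ∑ y', p x1 x2 y' := Finset.sum_nonneg fun y' _ => hp0 x1 x2 y'
    calc (∑ y', p x1 x2 y') * pV1 x1 v1 ≤ (∑ y', p x1 x2 y') * 1 :=
          mul_le_mul_of_nonneg_left h1 h2
      _ = ∑ y', p x1 x2 y' := mul_one _
  apply mul_left_cancel₀ hS.ne'
  have hM : ∀ x1, S * (p x1 x2 y * pV1 x1 v1) = (∑ y', p x1 x2 y') * pV1 x1 v1 * r := by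
    intro x1
    have h := hMarkov x1 x2 y
    calc S * (p x1 x2 y * pV1 x1 v1) = (p x1 x2 y * S) * pV1 x1 v1 := by ring
      _ = ((∑ y', p x1 x2 y') * r) * pV1 x1 v1 := by rw [← hSdef, ← hrdef] at h; rw [h]
      _ = _ := by ring
  have e1 : S * (∑ x1, p x1 x2 y * pV1 x1 v1 * (N / D)) = r * N := by
    rw [Finset.mul_sum]
    have step : ∀ x1 ∈ (Finset.univ : Finset A1),
        S * (p x1 x2 y * pV1 x1 v1 * (N / D)) =
          ((∑ y', p x1 x2 y') * pV1 x1 v1) * (r * (N / D)) := by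
      intro x1 _
      have := hM x1
      calc S * (p x1 x2 y * pV1 x1 v1 * (N / D))
          = (S * (p x1 x2 y * pV1 x1 v1)) * (N / D) := by ring
        _ = ((∑ y', p x1 x2 y') * pV1 x1 v1 * r) * (N / D) := by rw [this]
        _ = _ := by ring
    rw [Finset.sum_congr rfl step, ← Finset.sum_mul, ← hDdef]
    field_simp
  have e2 : S * (∑ x1, p x1 x2 y * pV1 x1 v1 * pV2 x1 x2 v1 v2) = r * N := by
    rw [Finset.mul_sum]
    have step : ∀ x1 ∈ (Finset.univ : Finset A1),
        S * (p x1 x2 y * pV1 x1 v1 * pV2 x1 x2 v1 v2) =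
          r * ((∑ y', p x1 x2 y') * pV1 x1 v1 * pV2 x1 x2 v1 v2) := by
      intro x1 _
      have := hM x1
      calc S * (p x1 x2 y * pV1 x1 v1 * pV2 x1 x2 v1 v2)
          = (S * (p x1 x2 y * pV1 x1 v1)) * pV2 x1 x2 v1 v2 := by ring
        _ = ((∑ y', p x1 x2 y') * pV1 x1 v1 * r) * pV2 x1 x2 v1 v2 := by rw [this]
        _ = _ := by ring
    rw [Finset.sum_congr rfl step, ← Finset.mul_sum, ← hNdef]
  rw [e1, e2]
end

section
/- Let X₁ = X₂ ⊕ Z with Z ~ Bern(q), q ∈ (0,1/2), Z independent of X₂ ~ Bern(1/2), and Y = X₁ ⊕ W with W ~ Bern(p), p ∈ (0,1/2), W independent of (X₁,X₂). Let U be a binary random variable with U ~ Bern(1/2), X₁ = U ⊕ V, V ~ Bern(r), U ⊥ V, and U − X₁ − (X₂,Y) a Markov chain. Then I(X₁;U|X₂) = g(r) and I(Y;U|X₂) = f(r), where g(r) = h₂(r∗q) − h₂(r) and f(r) = h₂(r∗q) − (1−p∗q)h₂(r ∗ pq/(1−p∗q)) − (p∗q)h₂(r ∗ p(1−q)/(p∗q)).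 -/
open Finset

/-- `g(r) = h₂(r ∗ q) − h₂(r)`. -/
noncomputable def gfun (q r : ℝ) : ℝ := h2 (bconv r q) - h2 r

/-- `f(r) = h₂(r∗q) − (1−p∗q) h₂(r ∗ pq/(1−p∗q)) − (p∗q) h₂(r ∗ p(1−q)/(p∗q))`. -/
noncomputable def ffun (p q r : ℝ) : ℝ :=
  h2 (bconv r q) - (1 - bconv p q) * h2 (bconv r (p * q / (1 - bconv p q)))
    - bconv p q * h2 (bconv r (p * (1 - q) / bconv p q))

/-- `Bern(s)` pmf on `Bool`. -/
noncomputable def bern (s : ℝ) (b : Bool) : ℝ := if b then s else 1 - s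

/-- `I(X₁;U|X₂)` in bits, from a joint pmf `P(u,x₁,x₂,y)` on `Bool⁴`. -/
noncomputable def iX1UcX2 (P : Bool → Bool → Bool → Bool → ℝ) : ℝ :=
  ∑ x1, ∑ u, ∑ x2,
    (∑ y, P u x1 x2 y) *
      Real.logb 2 (((∑ u', ∑ x1', ∑ y, P u' x1' x2 y) * (∑ y, P u x1 x2 y)) /
        ((∑ u', ∑ y, P u' x1 x2 y) * (∑ x1', ∑ y, P u x1' x2 y)))

/-- `I(Y;U|X₂)` in bits, from a joint pmf `P(u,x₁,x₂,y)` on `Bool⁴`. -/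
noncomputable def iYUcX2 (P : Bool → Bool → Bool → Bool → ℝ) : ℝ :=
  ∑ y, ∑ u, ∑ x2,
    (∑ x1, P u x1 x2 y) *
      Real.logb 2 (((∑ u', ∑ x1', ∑ y', P u' x1' x2 y') * (∑ x1, P u x1 x2 y)) /
        ((∑ u', ∑ x1, P u' x1 x2 y) * (∑ x1, ∑ y', P u x1 x2 y')))

noncomputable def nN (p q r : ℝ) (a b : Bool) : ℝ :=
  bern r a * (1 - q) * bern p b + bern r (!a) * q * bern p (!b)

lemma aux_split (c a b : ℝ) (hb : b ≠ 0) :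
    c * a * Real.logb 2 (a / b) = c * (a * Real.logb 2 a - a * Real.logb 2 b) := by
  rcases eq_or_ne a 0 with h | h
  · simp [h]
  · rw [Real.logb_div h hb]; ring

set_option maxHeartbeats 4000000 in

theorem part1_aux (p q r : ℝ) (hp : p ∈ Set.Ioo (0:ℝ) (1/2)) (hq : q ∈ Set.Ioo (0:ℝ) (1/2))
    (hr : r ∈ Set.Icc (0:ℝ) 1)
    (P : Bool → Bool → Bool → Bool → ℝ)
    (hP : P = fun u x1 x2 y =>
      (1/2 : ℝ) * bern r (xor u x1) * bern q (xor x1 x2) * bern p (xor x1 y)) :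
    iX1UcX2 P = gfun q r := by
  obtain ⟨hp0, hp1⟩ := hp
  obtain ⟨hq0, hq1⟩ := hq
  obtain ⟨hr0, hr1⟩ := hr
  have hq1' : q < 1 := by linarith
  have hp1' : p < 1 := by linarith
  have hbq : ∀ b, (0:ℝ) < bern q b := by intro b; cases b <;> simp [bern] <;> linarith
  have hbrq : ∀ b, (0:ℝ) < bern (bconv r q) b := by
    intro b; cases b <;> simp [bern, bconv] <;> nlinarith
  have m1 : ∀ u x1 x2 : Bool, ∑ y, P u x1 x2 y
      = 1/2 * bern r (xor u x1) * bern q (xor x1 x2) := by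
    intro u x1 x2
    simp only [hP, Fintype.sum_bool]
    cases u <;> cases x1 <;> cases x2 <;> simp [bern] <;> ring
  have m2 : ∀ x2 : Bool, (∑ u', ∑ x1', ∑ y, P u' x1' x2 y) = 1/2 := by
    intro x2
    simp only [hP, Fintype.sum_bool]
    cases x2 <;> simp [bern] <;> ring
  have m3 : ∀ x1 x2 : Bool, (∑ u', ∑ y, P u' x1 x2 y) = 1/2 * bern q (xor x1 x2) := by
    intro x1 x2
    simp only [hP, Fintype.sum_bool]
    cases x1 <;> cases x2 <;> simp [bern] <;> ring
  have m4 : ∀ u x2 : Bool, (∑ x1', ∑ y, P u x1' x2 y)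
      = 1/2 * bern (bconv r q) (xor u x2) := by
    intro u x2
    simp only [hP, Fintype.sum_bool]
    cases u <;> cases x2 <;> simp [bern, bconv] <;> ring
  rw [iX1UcX2]
  simp only [m2]
  simp only [m3]
  simp only [m4]
  simp only [m1]
  have harg : ∀ u x1 x2 : Bool,
      1/2 * (1/2 * bern r (xor u x1) * bern q (xor x1 x2)) /
        (1/2 * bern q (xor x1 x2) * (1/2 * bern (bconv r q) (xor u x2)))
      = bern r (xor u x1) / bern (bconv r q) (xor u x2) := by
    intro u x1 x2
    rw [div_eq_div_iff (mul_pos (mul_pos (by norm_num : (0:ℝ) < 1/2) (hbq (xor x1 x2))) (mul_pos (by norm_num : (0:ℝ) < 1/2) (hbrq (xor u x2)))).ne' (hbrq (xor u x2)).ne']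
    ring
  simp only [harg]
  have hsplit : ∀ u x1 x2 : Bool,
      1/2 * bern r (xor u x1) * bern q (xor x1 x2) *
        Real.logb 2 (bern r (xor u x1) / bern (bconv r q) (xor u x2))
      = 1/2 * bern q (xor x1 x2) *
          (bern r (xor u x1) * Real.logb 2 (bern r (xor u x1))
            - bern r (xor u x1) * Real.logb 2 (bern (bconv r q) (xor u x2))) := by
    intro u x1 x2
    linear_combination aux_split (1/2 * bern q (xor x1 x2)) (bern r (xor u x1))
      (bern (bconv r q) (xor u x2)) (hbrq (xor u x2)).ne'
  simp only [hsplit]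
  simp only [Fintype.sum_bool]
  simp only [gfun, h2, bconv, bern]
  norm_num
  ring_nf

set_option maxHeartbeats 4000000 in
theorem part2_aux (p q r : ℝ) (hp : p ∈ Set.Ioo (0:ℝ) (1/2)) (hq : q ∈ Set.Ioo (0:ℝ) (1/2))
    (hr : r ∈ Set.Icc (0:ℝ) 1)
    (P : Bool → Bool → Bool → Bool → ℝ)
    (hP : P = fun u x1 x2 y =>
      (1/2 : ℝ) * bern r (xor u x1) * bern q (xor x1 x2) * bern p (xor x1 y)) :
    iYUcX2 P = ffun p q r := by
  obtain ⟨hp0, hp1⟩ := hp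
  obtain ⟨hq0, hq1⟩ := hq
  obtain ⟨hr0, hr1⟩ := hr
  have hq1' : q < 1 := by linarith
  have hp1' : p < 1 := by linarith
  have hbrq : ∀ b, (0:ℝ) < bern (bconv r q) b := by
    intro b; cases b <;> simp [bern, bconv] <;> nlinarith
  have hbpq : ∀ b, (0:ℝ) < bern (bconv p q) b := by
    intro b; cases b <;> simp [bern, bconv] <;> nlinarith
  have h1p : (0:ℝ) < 1 - p := by linarith
  have h1q : (0:ℝ) < 1 - q := by linarith
  have key : ∀ A B : ℝ, 0 < A → 0 < B → 0 < (1-r)*A + r*B := by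
    intro A B hA hB
    rcases eq_or_lt_of_le hr0 with h|h
    · rw [← h]; simpa using hA
    · nlinarith [mul_pos h hB, mul_nonneg (by linarith : (0:ℝ) ≤ 1-r) hA.le]
  have hnN : ∀ a b : Bool, (0:ℝ) < nN p q r a b := by
    intro a b
    cases a <;> cases b <;> simp [nN, bern] <;>
      nlinarith [key ((1-q)*(1-p)) (q*p) (by positivity) (by positivity),
        key ((1-q)*p) (q*(1-p)) (by positivity) (by positivity),
        key (q*p) ((1-q)*(1-p)) (by positivity) (by positivity),
        key (q*(1-p)) ((1-q)*p) (by positivity) (by positivity)]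
  have hD0 : (1 - bconv p q) ≠ 0 := by
    simp only [bconv]; intro h; nlinarith [mul_pos hp0 hq0]
  have hD1 : bconv p q ≠ 0 := by
    simp only [bconv]; nlinarith [mul_pos hp0 (by linarith : (0:ℝ) < 1-q)]
  have m2 : ∀ x2 : Bool, (∑ u', ∑ x1', ∑ y', P u' x1' x2 y') = 1/2 := by
    intro x2
    simp only [hP, Fintype.sum_bool]
    cases x2 <;> simp [bern] <;> ring
  have w3 : ∀ x2 y : Bool, (∑ u', ∑ x1, P u' x1 x2 y)
      = 1/2 * bern (bconv p q) (xor x2 y) := by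
    intro x2 y
    simp only [hP, Fintype.sum_bool]
    cases x2 <;> cases y <;> simp [bern, bconv] <;> ring
  have m4 : ∀ u x2 : Bool, (∑ x1, ∑ y', P u x1 x2 y')
      = 1/2 * bern (bconv r q) (xor u x2) := by
    intro u x2
    simp only [hP, Fintype.sum_bool]
    cases u <;> cases x2 <;> simp [bern, bconv] <;> ring
  have w1 : ∀ u x2 y : Bool, (∑ x1, P u x1 x2 y)
      = 1/2 * nN p q r (xor u x2) (xor x2 y) := by
    intro u x2 y
    simp only [hP, Fintype.sum_bool]
    cases u <;> cases x2 <;> cases y <;> simp [bern, nN] <;> ring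
  rw [iYUcX2]
  simp only [m2]
  simp only [w3]
  simp only [m4]
  simp only [w1]
  have harg : ∀ u x2 y : Bool,
      1/2 * (1/2 * nN p q r (xor u x2) (xor x2 y)) /
        (1/2 * bern (bconv p q) (xor x2 y) * (1/2 * bern (bconv r q) (xor u x2)))
      = nN p q r (xor u x2) (xor x2 y) /
          (bern (bconv p q) (xor x2 y) * bern (bconv r q) (xor u x2)) := by
    intro u x2 y
    rw [div_eq_div_iff
      (mul_pos (mul_pos (by norm_num : (0:ℝ) < 1/2) (hbpq (xor x2 y)))
        (mul_pos (by norm_num : (0:ℝ) < 1/2) (hbrq (xor u x2)))).ne'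
      (mul_pos (hbpq (xor x2 y)) (hbrq (xor u x2))).ne']
    ring
  simp only [harg]
  have hsplit : ∀ u x2 y : Bool,
      1/2 * nN p q r (xor u x2) (xor x2 y) *
        Real.logb 2 (nN p q r (xor u x2) (xor x2 y) /
          (bern (bconv p q) (xor x2 y) * bern (bconv r q) (xor u x2)))
      = 1/2 * (nN p q r (xor u x2) (xor x2 y) * Real.logb 2 (nN p q r (xor u x2) (xor x2 y))
          - nN p q r (xor u x2) (xor x2 y) * Real.logb 2 (bern (bconv p q) (xor x2 y))
          - nN p q r (xor u x2) (xor x2 y) * Real.logb 2 (bern (bconv r q) (xor u x2))) := by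
    intro u x2 y
    rw [Real.logb_div (hnN _ _).ne' (mul_pos (hbpq _) (hbrq _)).ne',
      Real.logb_mul (hbpq _).ne' (hbrq _).ne']
    ring
  simp only [hsplit]
  simp only [Fintype.sum_bool]
  -- now handle the RHS
  have e1' : 1 - bconv r (p*q/(1 - bconv p q)) = nN p q r false false / (1 - bconv p q) := by
    have h : nN p q r false false = (1-r)*(1-q)*(1-p) + r*q*p := by simp [nN, bern]
    rw [h]
    simp only [bconv] at hD0 ⊢
    field_simp
    ring
  have e1 : bconv r (p*q/(1 - bconv p q)) = nN p q r true false / (1 - bconv p q) := by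
    have h : nN p q r true false = r*(1-q)*(1-p) + (1-r)*q*p := by simp [nN, bern]
    rw [h]
    simp only [bconv] at hD0 ⊢
    field_simp
    ring
  have e2' : 1 - bconv r (p*(1-q)/bconv p q) = nN p q r true true / bconv p q := by
    have h : nN p q r true true = r*(1-q)*p + (1-r)*q*(1-p) := by simp [nN, bern]
    rw [h]
    simp only [bconv] at hD1 ⊢
    field_simp
    ring
  have e2 : bconv r (p*(1-q)/bconv p q) = nN p q r false true / bconv p q := by
    have h : nN p q r false true = (1-r)*(1-q)*p + r*q*(1-p) := by simp [nN, bern]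
    rw [h]
    simp only [bconv] at hD1 ⊢
    field_simp
    ring
  rw [ffun]
  simp only [h2]
  rw [e1', e2', e1, e2]
  rw [Real.logb_div (hnN true false).ne' hD0, Real.logb_div (hnN false false).ne' hD0,
    Real.logb_div (hnN false true).ne' hD1, Real.logb_div (hnN true true).ne' hD1]
  field_simp
  simp only [nN, bern, bconv, bconv]
  norm_num
  ring1

/-- in the binary model `X₁ = U ⊕ V`, `X₂ = X₁ ⊕ Z`, `Y = X₁ ⊕ W` with
`U ~ Bern(1/2)`, `V ~ Bern(r)`, `Z ~ Bern(q)`, `W ~ Bern(p)` all independent, one has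
`I(X₁;U|X₂) = g(r)` and `I(Y;U|X₂) = f(r)`. -/
theorem stmt10 (p q r : ℝ) (hp : p ∈ Set.Ioo (0:ℝ) (1/2)) (hq : q ∈ Set.Ioo (0:ℝ) (1/2))
    (hr : r ∈ Set.Icc (0:ℝ) 1)
    (P : Bool → Bool → Bool → Bool → ℝ)
    (hP : P = fun u x1 x2 y =>
      (1/2 : ℝ) * bern r (xor u x1) * bern q (xor x1 x2) * bern p (xor x1 y)) :
    iX1UcX2 P = gfun q r ∧ iYUcX2 P = ffun p q r :=
  ⟨part1_aux p q r hp hq hr P hP, part2_aux p q r hp hq hr P hP⟩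
end
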